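/- arXiv:2012.07492 — 3 statements merged into one kernel-verified Lean document; each statement's English description precedes it below -/
import Mathlib

section
/- Let G be a group, N a normal subgroup with G/N finite cyclic, k an algebraically closed field, and (π, V) an irreducible k-representation of N such that for every g ∈ G the conjugate representation πᵍ is isomorphic to π (G normalizes π). Assume EndN(V) = k (Schur). Then π extends to a representation of G on V, i.e., there exists a representation π̃ of G on V with π̃|N = π. -/
/-!
Choose `g₀` whose image generates `G ⧸ N`, of order `n`, and an intertwiner `A₀` for conjugation
by `g₀`. Then `A₀ ^ n` and `π (g₀ ^ n)` intertwine the same conjugation, so `π (g₀ ^ n)⁻¹ * A₀ ^ n`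
commutes with `π N` and is a nonzero scalar `c` by Schur; dividing `A₀` by an `n`-th root of `c`
gives `A` with `A ^ n = π (g₀ ^ n)`. Now `(x, t) ↦ π x * A ^ t` is a homomorphism on
`N ⋊ ℤ` (with `ℤ` acting through conjugation by `g₀`), and it kills the kernel of
`(x, t) ↦ x * g₀ ^ t`, which consists of the pairs `(g₀ ^ (-t), t)` with `n ∣ t`; so it descends
to `G`.
-/

theorem Function.Semiconj.mulAut_zpow {M M' : Type*} [Mul M] [Mul M'] {f : M → M'}
    {α : MulAut M} {β : MulAut M'} (h : Function.Semiconj f α β) (t : ℤ) :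
    Function.Semiconj f ⇑(α ^ t) ⇑(β ^ t) := by
  have hinv : Function.Semiconj f ⇑α⁻¹ ⇑β⁻¹ :=
    h.inverses_right α.apply_symm_apply β.symm_apply_apply
  induction t using Int.induction_on with
  | zero => exact Function.Semiconj.id_right
  | succ t ih =>
    rw [zpow_add_one, zpow_add_one, MulAut.coe_mul, MulAut.coe_mul]
    exact ih.comp_right h
  | pred t ih =>
    rw [zpow_sub_one, zpow_sub_one, MulAut.coe_mul, MulAut.coe_mul]
    exact ih.comp_right hinv

section Schur

variable {N E : Type*} [Group N] [Group E]

theorem Function.Semiconj.commute_inv_mul_pow {ρ : N →* E} {α : MulAut N} {A₀ : E}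
    (h : Function.Semiconj ρ α (MulAut.conj A₀)) {n : ℕ} {x₀ : N}
    (hα : α ^ n = MulAut.conj x₀) (x : N) : Commute ((ρ x₀)⁻¹ * A₀ ^ n) (ρ x) := by
  have hconj : A₀ ^ n * ρ x * (A₀ ^ n)⁻¹ = ρ x₀ * ρ x * (ρ x₀)⁻¹ := by
    simpa [hα, ← map_pow] using (h.mulAut_zpow n x).symm
  calc (ρ x₀)⁻¹ * A₀ ^ n * ρ x
      = (ρ x₀)⁻¹ * (A₀ ^ n * ρ x * (A₀ ^ n)⁻¹) * A₀ ^ n := by group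
    _ = ρ x * ((ρ x₀)⁻¹ * A₀ ^ n) := by rw [hconj]; group

theorem exists_semiconj_conj_pow_eq {k R : Type*} [Field k] [IsAlgClosed k] [Ring R]
    [Algebra k R] [Nontrivial R] {ρ : N →* Rˣ}
    (hschur : ∀ r : R, (∀ x, Commute r (ρ x)) → r ∈ Set.range (algebraMap k R))
    {α : MulAut N} {A₀ : Rˣ} (h : Function.Semiconj ρ α (MulAut.conj A₀)) {n : ℕ} (hn : n ≠ 0)
    {x₀ : N} (hα : α ^ n = MulAut.conj x₀) :
    ∃ A : Rˣ, Function.Semiconj ρ α (MulAut.conj A) ∧ ρ x₀ = A ^ n := by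
  set S := (ρ x₀)⁻¹ * A₀ ^ n with hS
  obtain ⟨c, hc⟩ := hschur S fun x => (h.commute_inv_mul_pow hα x).units_val
  have hc0 : c ≠ 0 := by rintro rfl; exact S.ne_zero (by simp [← hc])
  obtain ⟨d, hd⟩ := IsAlgClosed.exists_pow_nat_eq c (Nat.pos_of_ne_zero hn)
  have hd0 : d ≠ 0 := by rintro rfl; exact hc0 (by simp [← hd, hn])
  let D : Rˣ := Units.map (algebraMap k R).toMonoidHom (Units.mk0 d hd0)
  have hD : ∀ u : Rˣ, Commute D⁻¹ u := fun u =>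
    (Commute.units_of_val (u₁ := D) (Algebra.commute_algebraMap_left d (u : R))).inv_left
  have hDS : D ^ n = S := Units.ext (by simp [D, ← map_pow, hd, hc])
  refine ⟨D⁻¹ * A₀, fun x => ?_, ?_⟩
  · calc ρ (α x) = A₀ * ρ x * A₀⁻¹ := h x
      _ = A₀ * ρ x * A₀⁻¹ * D⁻¹ * D := by group
      _ = MulAut.conj (D⁻¹ * A₀) (ρ x) := by
        rw [← (hD _).eq, MulAut.conj_apply]; group
  · rw [(hD A₀).eq, ((hD A₀).symm).mul_pow, inv_pow, hDS, hS]
    group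

end Schur

section Extension

variable {G E : Type*} [Group G] [Group E] {N : Subgroup G} [N.Normal]

theorem map_eq_zpow_of_map_eq_pow_orderOf (ρ : N →* E) {g₀ : G} {A : E} {x₀ : N}
    (hx₀ : (x₀ : G) = g₀ ^ orderOf (g₀ : G ⧸ N)) (hA : ρ x₀ = A ^ orderOf (g₀ : G ⧸ N))
    (t : ℤ) (x : N) (hx : (x : G) = g₀ ^ t) : ρ x = A ^ t := by
  obtain ⟨s, rfl⟩ : (orderOf (g₀ : G ⧸ N) : ℤ) ∣ t := by
    rw [orderOf_dvd_iff_zpow_eq_one, ← QuotientGroup.mk_zpow, ← hx,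
      QuotientGroup.eq_one_iff]
    exact x.2
  have : x = x₀ ^ s := Subtype.ext (by simp [hx, hx₀, zpow_mul])
  rw [this, map_zpow, hA, zpow_mul, zpow_natCast]

theorem exists_monoidHom_extend_of_semiconj (ρ : N →* E) {g₀ : G}
    (hg₀ : ∀ q : G ⧸ N, q ∈ Subgroup.zpowers (g₀ : G ⧸ N)) {A : E}
    (hconj : Function.Semiconj ρ (MulAut.conjNormal g₀) (MulAut.conj A))
    (hpow : ∀ (t : ℤ) (x : N), (x : G) = g₀ ^ t → ρ x = A ^ t) :
    ∃ ρ' : G →* E, ∀ x : N, ρ' x = ρ x := by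
  let φ : Multiplicative ℤ →* MulAut N := MulAut.conjNormal.comp (zpowersHom G g₀)
  let f : N ⋊[φ] Multiplicative ℤ →* G :=
    SemidirectProduct.lift N.subtype (zpowersHom G g₀) fun t => by
      ext x; simp [φ, -map_zpow, MulAut.conjNormal_apply]
  let F : N ⋊[φ] Multiplicative ℤ →* E :=
    SemidirectProduct.lift ρ (zpowersHom E A) fun t => by
      ext x
      simpa [φ] using hconj.mulAut_zpow t.toAdd x
  have hf : Function.Surjective f := by
    intro g
    obtain ⟨t, ht⟩ := Subgroup.mem_zpowers_iff.mp (hg₀ g)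
    have hmem : g / g₀ ^ t ∈ N :=
      QuotientGroup.eq_iff_div_mem.mp (by rw [QuotientGroup.mk_zpow, ht])
    exact ⟨⟨⟨_, hmem⟩, .ofAdd t⟩, by simp [f, SemidirectProduct.lift]⟩
  have hker : f.ker ≤ F.ker := by
    rintro ⟨x, t⟩ hx
    replace hx : (x : G) * g₀ ^ t.toAdd = 1 := by simpa [f, SemidirectProduct.lift] using hx
    have : ρ x⁻¹ = A ^ t.toAdd := hpow _ _ (by simpa using (eq_inv_of_mul_eq_one_right hx).symm)
    simp [F, SemidirectProduct.lift, ← this]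
  refine ⟨f.liftOfSurjective hf ⟨F, hker⟩, fun x => ?_⟩
  simpa [f, F] using f.liftOfRightInverse_comp_apply _ _ ⟨F, hker⟩ (SemidirectProduct.inl x)

end Extension

theorem Representation.semiconj_conjNormal_ofLinearEquiv {G k V : Type*} [Group G]
    {N : Subgroup G} [hN : N.Normal] [CommSemiring k] [AddCommMonoid V] [Module k V]
    (π : Representation k N V) {g : G} {T : V ≃ₗ[k] V}
    (hT : ∀ n : N, (T : V →ₗ[k] V) ∘ₗ π n = π ⟨g * n * g⁻¹, hN.conj_mem n n.2 g⟩ ∘ₗ T) :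
    Function.Semiconj π.asGroupHom (MulAut.conjNormal g)
      (MulAut.conj (LinearMap.GeneralLinearGroup.ofLinearEquiv T)) := by
  intro x
  refine eq_mul_inv_of_mul_eq (Units.ext ?_)
  have hx : MulAut.conjNormal g x = ⟨g * x * g⁻¹, hN.conj_mem x x.2 g⟩ :=
    Subtype.ext (MulAut.conjNormal_apply g x)
  simp only [Units.val_mul, Representation.asGroupHom_apply, hx, Module.End.mul_eq_comp]
  exact (hT x).symm

/-- let `G` be a group, `N` a normal subgroup with `G/N` finite cyclic,
`k` an algebraically closed field, and `(π, V)` an irreducible `k`-representation of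
`N` which is normalized by `G` (every conjugate `πᵍ` is isomorphic to `π`) and
satisfies Schur's condition `End_N(V) = k`.  Then `π` extends to a representation of
`G` on `V`. -/
theorem stmt3 {G : Type} [Group G] (N : Subgroup G) [hN : N.Normal]
    [Finite (G ⧸ N)] [IsCyclic (G ⧸ N)]
    {k V : Type} [Field k] [IsAlgClosed k] [AddCommGroup V] [Module k V]
    (π : Representation k N V)
    (hirr : IsSimpleModule (MonoidAlgebra k N) π.asModule)
    (hschur : ∀ f : V →ₗ[k] V, (∀ n : N, f ∘ₗ π n = π n ∘ₗ f) →
      ∃ c : k, f = c • LinearMap.id)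
    (hstab : ∀ g : G, ∃ T : V ≃ₗ[k] V, ∀ n : N,
      (T : V →ₗ[k] V) ∘ₗ π n = π ⟨g * n * g⁻¹, hN.conj_mem n n.2 g⟩ ∘ₗ (T : V →ₗ[k] V)) :
    ∃ π' : Representation k G V, ∀ n : N, π' (n : G) = π n := by
  obtain ⟨q, hq⟩ := IsCyclic.exists_generator (α := G ⧸ N)
  obtain ⟨g₀, rfl⟩ := QuotientGroup.mk_surjective q
  have : Nontrivial V :=
    have := IsSimpleModule.nontrivial (MonoidAlgebra k N) π.asModule
    π.asModuleEquiv.toEquiv.symm.nontrivial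
  have hschur' : ∀ r : Module.End k V, (∀ x, Commute r (π.asGroupHom x)) →
      r ∈ Set.range (algebraMap k (Module.End k V)) := fun r hr => by
    obtain ⟨c, hc⟩ := hschur r fun x => by
      simpa [Representation.asGroupHom_apply, Module.End.mul_eq_comp] using (hr x).eq
    exact ⟨c, by rw [hc, Module.algebraMap_end_eq_smul_id]⟩
  obtain ⟨T, hT⟩ := hstab g₀
  set n := orderOf (g₀ : G ⧸ N)
  let x₀ : N := ⟨g₀ ^ n, by
    rw [← QuotientGroup.eq_one_iff, QuotientGroup.mk_pow, pow_orderOf_eq_one]⟩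
  have hx₀ : MulAut.conjNormal g₀ ^ n = MulAut.conj x₀ := by
    ext x; simp [x₀, ← map_pow, MulAut.conjNormal_apply]
  obtain ⟨A, hA, hAn⟩ := exists_semiconj_conj_pow_eq hschur'
    (π.semiconj_conjNormal_ofLinearEquiv hT) (orderOf_pos _).ne' hx₀
  obtain ⟨ρ, hρ⟩ := exists_monoidHom_extend_of_semiconj π.asGroupHom hq hA
    (map_eq_zpow_of_map_eq_pow_orderOf _ rfl hAn)
  exact ⟨(Units.coeHom _).comp ρ, fun x => by simp [hρ, Representation.asGroupHom_apply]⟩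
end

section
/- Let K be a group, K' ⊴ K a normal subgroup of finite index, k a field, and π a k-representation of K (not necessarily of finite length) such that Res_{K'} of every irreducible subquotient of π is semisimple of finite length. If τ' is an irreducible subquotient of Res_{K'} π and π embeds into a direct sum ⊕_{i∈I} πᵢ of finite-length k[K]-modules, then there exists an irreducible subquotient τ of π such that τ' is a direct summand of Res_{K'} τ. -/
/-!
A simple subquotient of `Res π` is already a subquotient of `Res N` for the cyclic submodule `N`
generated by a vector representing a nonzero class, and `N` has finite length since it embeds
into finitely many of the `πᵢ`. For finite length, induct along a composition series: given
`0 → P → N → N ⧸ P → 0` with `N ⧸ P` simple, a simple subquotient of `Res N` is one of `Res P`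
or of `Res (N ⧸ P)`, and in the latter case it is a direct summand because `Res (N ⧸ P)` is
semisimple.
-/

open scoped DirectSum

/-- `N` is a subquotient of `M` (as `R`-modules). -/
def IsSubquotient (R : Type*) [Ring R] (M : Type*) [AddCommGroup M] [Module R M]
    (N : Type*) [AddCommGroup N] [Module R N] : Prop :=
  ∃ (W : Submodule R M) (U : Submodule R W), Nonempty ((↥W ⧸ U) ≃ₗ[R] N)

/-- Restriction functor from `k[K]`-modules to `k[K']`-modules for a subgroup
`K' ≤ K`, i.e. restriction of representations of `K` to `K'`. -/
noncomputable def resFunctor (k : Type) [Field k] {K : Type} [Group K] (K' : Subgroup K) :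
    CategoryTheory.Functor (ModuleCat (MonoidAlgebra k K)) (ModuleCat (MonoidAlgebra k K')) :=
  ModuleCat.restrictScalars (MonoidAlgebra.mapDomainRingHom k K'.subtype)

section Subquotients

variable {R : Type*} [Ring R] {M A C X : Type*}
  [AddCommGroup M] [AddCommGroup A] [AddCommGroup C] [AddCommGroup X]
  [Module R M] [Module R A] [Module R C] [Module R X]

theorem IsSubquotient.subsingleton [Subsingleton M] (h : IsSubquotient R M X) :
    Subsingleton X := by
  obtain ⟨W, U, ⟨e⟩⟩ := h
  exact e.symm.toEquiv.subsingleton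

theorem Submodule.le_sup_or_inf_le_of_isSimpleModule {W : Submodule R M} {U : Submodule R W}
    [IsSimpleModule R (W ⧸ U)] (N : Submodule R M) :
    W ≤ U.map W.subtype ⊔ N ∨ W ⊓ N ≤ U.map W.subtype := by
  rcases (isSimpleModule_iff_isCoatom.mp ‹_›).le_iff.mp
    (le_sup_left : U ≤ U ⊔ N.comap W.subtype) with htop | heq
  · left
    calc W = (U ⊔ N.comap W.subtype).map W.subtype := by rw [htop, map_subtype_top]
      _ ≤ U.map W.subtype ⊔ N := by
        rw [map_sup, map_comap_subtype]; exact sup_le_sup_left inf_le_right _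
  · right
    rw [← map_comap_subtype]
    exact map_mono (heq ▸ le_sup_right)

variable {W : Submodule R M} {U : Submodule R W}

theorem isSubquotient_of_le_sup_range (e : (W ⧸ U) ≃ₗ[R] X) {i : A →ₗ[R] M}
    (h : W ≤ U.map W.subtype ⊔ LinearMap.range i) : IsSubquotient R A X := by
  let θ : W.comap i →ₗ[R] W ⧸ U := U.mkQ ∘ₗ i.restrict fun _ ha ↦ ha
  have hθ : Function.Surjective θ := by
    rintro ⟨w⟩
    obtain ⟨_, ⟨u, hu, rfl⟩, _, ⟨a, rfl⟩, hw⟩ := Submodule.mem_sup.mp (h w.2)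
    have ha : i a ∈ W := by rw [eq_sub_of_add_eq' hw]; exact W.sub_mem w.2 u.2
    refine ⟨⟨a, ha⟩, (Submodule.Quotient.eq U).mpr ?_⟩
    convert U.neg_mem hu using 1
    ext; simp [← hw]
  exact ⟨_, _, ⟨(θ.quotKerEquivOfSurjective hθ).trans e⟩⟩

theorem isSubquotient_of_inf_ker_le (e : (W ⧸ U) ≃ₗ[R] X) (p : M →ₗ[R] C)
    (h : W ⊓ LinearMap.ker p ≤ U.map W.subtype) : IsSubquotient R C X := by
  let φ : W →ₗ[R] W.map p := p.restrict fun _ hw ↦ Submodule.mem_map_of_mem hw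
  have hφ : Function.Surjective φ := by
    rintro ⟨_, w, hw, rfl⟩
    exact ⟨⟨w, hw⟩, rfl⟩
  have hker : LinearMap.ker φ ≤ U := by
    intro w hw
    obtain ⟨u, hu, huw⟩ := h ⟨w.2, congrArg Subtype.val hw⟩
    exact Subtype.ext huw ▸ hu
  let ψ := (U.map φ).mkQ ∘ₗ φ
  have hψ : LinearMap.ker ψ = U := by
    rw [LinearMap.ker_comp, Submodule.ker_mkQ, Submodule.comap_map_eq, sup_eq_left.mpr hker]
  have hψ' : Function.Surjective ψ := (U.map φ).mkQ_surjective.comp hφ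
  exact ⟨_, U.map φ,
    ⟨(ψ.quotKerEquivOfSurjective hψ').symm.trans ((Submodule.quotEquivOfEq _ _ hψ).trans e)⟩⟩

theorem isSubquotient_of_mem_range (e : (W ⧸ U) ≃ₗ[R] X) [IsSimpleModule R (W ⧸ U)]
    {x : W} (hx : x ∉ U) {i : A →ₗ[R] M} (hxi : (x : M) ∈ LinearMap.range i) :
    IsSubquotient R A X := by
  refine isSubquotient_of_le_sup_range e
    ((W.le_sup_or_inf_le_of_isSimpleModule (LinearMap.range i)).resolve_right fun h ↦ hx ?_)
  obtain ⟨u, hu, hux⟩ := h ⟨x.2, hxi⟩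
  exact Subtype.ext hux ▸ hu

theorem IsSubquotient.left_or_right_of_ker_le_range (hX : IsSimpleModule R X)
    (h : IsSubquotient R M X) (i : A →ₗ[R] M) (p : M →ₗ[R] C)
    (hip : LinearMap.ker p ≤ LinearMap.range i) :
    IsSubquotient R A X ∨ IsSubquotient R C X := by
  obtain ⟨W, U, ⟨e⟩⟩ := h
  have : IsSimpleModule R (W ⧸ U) := .congr e
  exact (W.le_sup_or_inf_le_of_isSimpleModule _).imp
    (fun hW ↦ isSubquotient_of_le_sup_range e (hW.trans (sup_le_sup_left hip _)))
    (isSubquotient_of_inf_ker_le e p)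

def HasDirectSummand (R M X : Type*) [Ring R] [AddCommGroup M] [Module R M]
    [AddCommGroup X] [Module R X] : Prop :=
  ∃ p q : Submodule R M, IsCompl p q ∧ Nonempty (p ≃ₗ[R] X)

theorem HasDirectSummand.of_linearEquiv {N : Type*} [AddCommGroup N] [Module R N]
    (e : M ≃ₗ[R] N) (h : HasDirectSummand R M X) : HasDirectSummand R N X := by
  obtain ⟨p, q, hpq, ⟨eX⟩⟩ := h
  exact ⟨p.map (e : M →ₗ[R] N), q.map (e : M →ₗ[R] N),
    (Submodule.orderIsoMapComap e).isCompl hpq,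
    ⟨(Submodule.equivMapOfInjective _ e.injective p).symm.trans eX⟩⟩

theorem IsSubquotient.hasDirectSummand [IsSemisimpleModule R M] (h : IsSubquotient R M X) :
    HasDirectSummand R M X := by
  obtain ⟨W, U, ⟨e⟩⟩ := h
  obtain ⟨P, ⟨eP⟩⟩ := IsSemisimpleModule.exists_submodule_linearEquiv_quotient U
  obtain ⟨q, hq⟩ := exists_isCompl (P.map W.subtype)
  exact ⟨_, q, hq, ⟨(P.equivMapOfInjective _ W.injective_subtype).symm.trans (eP.trans e)⟩⟩

end Subquotients

theorem isFiniteLength_span_singleton_of_injective_directSum {R ι N : Type*} [Ring R]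
    [AddCommGroup N] [Module R N] {M : ι → Type*} [∀ i, AddCommGroup (M i)]
    [∀ i, Module R (M i)] (hM : ∀ i, IsFiniteLength R (M i)) (f : N →ₗ[R] ⨁ i, M i)
    (hf : Function.Injective f) (x : N) : IsFiniteLength R (Submodule.span R {x}) := by
  classical
  let s := (f x).support
  have (j : s) := (isFiniteLength_iff_isNoetherian_isArtinian.mp (hM j)).1
  have (j : s) := (isFiniteLength_iff_isNoetherian_isArtinian.mp (hM j)).2
  let Φ : (⨁ i, M i) →ₗ[R] ∀ j : s, M j := LinearMap.pi fun j ↦ DirectSum.component R ι M j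
  refine IsFiniteLength.of_injective (f := Φ ∘ₗ f ∘ₗ (Submodule.span R {x}).subtype)
    (isFiniteLength_iff_isNoetherian_isArtinian.mpr ⟨inferInstance, inferInstance⟩) ?_
  rw [← LinearMap.ker_eq_bot, eq_bot_iff]
  rintro ⟨_, hv⟩ hΦ
  obtain ⟨r, rfl⟩ := Submodule.mem_span_singleton.mp hv
  have hfv : f (r • x) = 0 := by
    ext j
    by_cases hj : j ∈ s
    · exact congrFun hΦ ⟨j, hj⟩
    · rw [map_smul, DirectSum.smul_apply, DFinsupp.notMem_support_iff.mp hj, smul_zero]; rfl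
  exact (Submodule.mem_bot R).mpr (Subtype.ext (hf (hfv.trans f.map_zero.symm)))

section Restriction

universe v w

variable {R : Type*} {S : Type w} [Ring R] [Ring S] (φ : R →+* S)

noncomputable abbrev Res (M : Type v) [AddCommGroup M] [Module S M] : ModuleCat.{v} R :=
  (ModuleCat.restrictScalars φ).obj (ModuleCat.of S M)

def HasSimpleSubquotientWithSummand (M : Type*) [AddCommGroup M] [Module S M]
    (X : Type*) [AddCommGroup X] [Module R X] : Prop :=
  ∃ (W : Submodule S M) (U : Submodule S W),
    IsSimpleModule S (W ⧸ U) ∧ HasDirectSummand R (Res φ (W ⧸ U)) X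

variable {M N X : Type*} [AddCommGroup M] [AddCommGroup N] [AddCommGroup X]
  [Module S M] [Module S N] [Module R X]

def LinearMap.res (g : M →ₗ[S] N) : Res φ M →ₗ[R] Res φ N where
  toFun := g
  map_add' := g.map_add
  map_smul' r := g.map_smul (φ r)

def LinearEquiv.res (e : M ≃ₗ[S] N) : Res φ M ≃ₗ[R] Res φ N :=
  { e.toLinearMap.res φ, e.toEquiv with }

/-- A simple module is a quotient `S ⧸ I` of the ring, so it has a copy in every universe. -/
theorem isSemisimpleModule_res_of_isSimpleModule
    (hres : ∀ σ : ModuleCat.{max w v} S, IsSimpleModule S σ →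
      IsSemisimpleModule R ((ModuleCat.restrictScalars φ).obj σ))
    [IsSimpleModule S M] : IsSemisimpleModule R (Res φ M) := by
  obtain ⟨I, -, ⟨e⟩⟩ := isSimpleModule_iff_quot_maximal.mp ‹IsSimpleModule S M›
  let l : ULift.{v} (S ⧸ I) ≃ₗ[S] M := ULift.moduleEquiv.trans e.symm
  have := hres (.of S (ULift.{v} (S ⧸ I))) (.congr l)
  exact .congr (l.res φ).symm

namespace HasSimpleSubquotientWithSummand

theorem of_quotient_equiv (W : Submodule S M) (U : Submodule S W) (e : (W ⧸ U) ≃ₗ[S] N)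
    [IsSimpleModule S N] (h : HasDirectSummand R (Res φ N) X) :
    HasSimpleSubquotientWithSummand φ M X :=
  ⟨W, U, .congr e, h.of_linearEquiv (e.res φ).symm⟩

theorem of_quotient (P : Submodule S M) [IsSimpleModule S (M ⧸ P)]
    (h : HasDirectSummand R (Res φ (M ⧸ P)) X) :
    HasSimpleSubquotientWithSummand φ M X :=
  of_quotient_equiv φ ⊤ (P.comap (⊤ : Submodule S M).subtype)
    (Submodule.Quotient.equiv _ P Submodule.topEquiv (by ext; simp)) h

theorem of_injective (g : M →ₗ[S] N) (hg : Function.Injective g)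
    (h : HasSimpleSubquotientWithSummand φ M X) : HasSimpleSubquotientWithSummand φ N X := by
  obtain ⟨W, U, _, hX⟩ := h
  let eW := Submodule.equivMapOfInjective g hg W
  exact of_quotient_equiv φ (W.map g) (U.map eW.toLinearMap)
    (Submodule.Quotient.equiv U _ eW rfl).symm hX

theorem of_isFiniteLength
    (hres : ∀ σ : ModuleCat.{max w v} S, IsSimpleModule S σ →
      IsSemisimpleModule R ((ModuleCat.restrictScalars φ).obj σ))
    (hX : IsSimpleModule R X) (hM : IsFiniteLength S M) (h : IsSubquotient R (Res φ M) X) :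
    HasSimpleSubquotientWithSummand φ M X := by
  induction hM with
  | @of_subsingleton M _ _ hM₀ =>
    have : Subsingleton (Res φ M) := hM₀
    have := IsSimpleModule.nontrivial R X
    exact (not_subsingleton X h.subsingleton).elim
  | @of_simple_quotient M _ _ P _ _ ih =>
    rcases h.left_or_right_of_ker_le_range hX (P.subtype.res φ) (P.mkQ.res φ)
      (LinearMap.exact_subtype_mkQ P).linearMap_ker_eq.le with hP | hQ
    · exact (ih hP).of_injective φ P.subtype P.injective_subtype
    · have : IsSemisimpleModule R (Res φ (M ⧸ P)) :=
        isSemisimpleModule_res_of_isSimpleModule φ hres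
      exact of_quotient φ P hQ.hasDirectSummand

end HasSimpleSubquotientWithSummand

end Restriction

theorem stmt7_general {k : Type} [Field k] {K : Type} [Group K]
    (K' : Subgroup K)
    (π : ModuleCat (MonoidAlgebra k K))
    (hress : ∀ σ : ModuleCat (MonoidAlgebra k K), IsSimpleModule (MonoidAlgebra k K) σ →
      IsSemisimpleModule (MonoidAlgebra k K') ((resFunctor k K').obj σ) ∧
        IsFiniteLength (MonoidAlgebra k K') ((resFunctor k K').obj σ))
    (hemb : ∃ (ι : Type) (M : ι → ModuleCat (MonoidAlgebra k K)),
      (∀ i, IsFiniteLength (MonoidAlgebra k K) (M i)) ∧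
      ∃ f : π →ₗ[MonoidAlgebra k K] (⨁ i, M i), Function.Injective f)
    (τ' : ModuleCat (MonoidAlgebra k K'))
    (hτ' : IsSimpleModule (MonoidAlgebra k K') τ')
    (hsubq : IsSubquotient (MonoidAlgebra k K') ((resFunctor k K').obj π) τ') :
    ∃ (W : Submodule (MonoidAlgebra k K) π) (U : Submodule (MonoidAlgebra k K) W),
      IsSimpleModule (MonoidAlgebra k K) (↥W ⧸ U) ∧
      ∃ (p q : Submodule (MonoidAlgebra k K')
          ((resFunctor k K').obj (ModuleCat.of (MonoidAlgebra k K) (↥W ⧸ U)))),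
        IsCompl p q ∧ Nonempty (p ≃ₗ[MonoidAlgebra k K'] τ') := by
  let φ := MonoidAlgebra.mapDomainRingHom k K'.subtype
  obtain ⟨ι, M, hM, f, hf⟩ := hemb
  obtain ⟨W, U, ⟨e⟩⟩ := hsubq
  have : IsSimpleModule _ (W ⧸ U) := .congr e
  obtain ⟨x, -, hx⟩ := SetLike.exists_of_lt (isSimpleModule_iff_isCoatom.mp this).lt_top
  let N : Submodule (MonoidAlgebra k K) π := .span _ {x.1}
  have hN : IsFiniteLength _ N :=
    isFiniteLength_span_singleton_of_injective_directSum hM f hf x.1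
  have hxN : IsSubquotient _ (Res φ N) τ' :=
    isSubquotient_of_mem_range e hx (i := N.subtype.res φ)
      ⟨⟨x.1, Submodule.mem_span_singleton_self _⟩, rfl⟩
  exact (HasSimpleSubquotientWithSummand.of_isFiniteLength φ (fun σ hσ ↦ (hress σ hσ).1) hτ' hN
    hxN).of_injective φ N.subtype N.injective_subtype

/-- let `K' ⊴ K` be of finite index and `k` a field.  Let `π` be a
`k`-representation of `K` (i.e. a `k[K]`-module) such that the restriction to `K'`
of every irreducible `k[K]`-module is semisimple of finite length, and suppose `π`
embeds into a direct sum of finite-length `k[K]`-modules.  If `τ'` is an irreducible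
subquotient of `Res_{K'} π`, then there is an irreducible subquotient `W/U` of `π`
such that `τ'` is a direct summand of `Res_{K'}(W/U)`. -/
theorem stmt7 {k : Type} [Field k] {K : Type} [Group K]
    (K' : Subgroup K) [K'.Normal] [K'.FiniteIndex]
    (π : ModuleCat (MonoidAlgebra k K))
    (hress : ∀ σ : ModuleCat (MonoidAlgebra k K), IsSimpleModule (MonoidAlgebra k K) σ →
      IsSemisimpleModule (MonoidAlgebra k K') ((resFunctor k K').obj σ) ∧
        IsFiniteLength (MonoidAlgebra k K') ((resFunctor k K').obj σ))
    (hemb : ∃ (ι : Type) (M : ι → ModuleCat (MonoidAlgebra k K)),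
      (∀ i, IsFiniteLength (MonoidAlgebra k K) (M i)) ∧
      ∃ f : π →ₗ[MonoidAlgebra k K] (⨁ i, M i), Function.Injective f)
    (τ' : ModuleCat (MonoidAlgebra k K'))
    (hτ' : IsSimpleModule (MonoidAlgebra k K') τ')
    (hsubq : IsSubquotient (MonoidAlgebra k K') ((resFunctor k K').obj π) τ') :
    ∃ (W : Submodule (MonoidAlgebra k K) π) (U : Submodule (MonoidAlgebra k K) W),
      IsSimpleModule (MonoidAlgebra k K) (↥W ⧸ U) ∧
      ∃ (p q : Submodule (MonoidAlgebra k K')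
          ((resFunctor k K').obj (ModuleCat.of (MonoidAlgebra k K) (↥W ⧸ U)))),
        IsCompl p q ∧ Nonempty (p ≃ₗ[MonoidAlgebra k K'] τ') :=
  stmt7_general K' π hress hemb τ' hτ' hsubq
end

section
/- Let G be a group, H an open (finite-index) subgroup containing a normal subgroup N of G with G/N abelian, k a field, and ρ₁ a k-representation of H such that π = Ind_H^G ρ₁ is irreducible. Then Res_{H} π contains ρ₁ as a direct summand, and the multiplicity of any irreducible constituent ρ' of Res_N ρ₁ in Res_N π equals [S : H], where S = {g ∈ G : (ρ')ᵍ ≅ ρ'} is the G-stabilizer (up to isomorphism) of ρ' — assuming Res_N π is semisimple. -/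
open Pointwise DirectSum
open scoped DirectSum

namespace Paper

variable {k : Type} [Field k] {G : Type} [Group G]
variable {V : Type} [AddCommGroup V] [Module k V]

/-- The space of the compactly induced representation `ind_H^G ρ`:
functions `f : G → V` with `f (h * x) = ρ h (f x)` supported on finitely many cosets. -/
def cInd (H : Subgroup G) (ρ : Representation k H V) : Submodule k (G → V) where
  carrier := {f | (∀ (h : H) (x : G), f (↑h * x) = ρ h (f x)) ∧
      ∃ S : Set G, S.Finite ∧ Function.support f ⊆ (H : Set G) * S}
  add_mem' := by
    rintro f g ⟨hf, Sf, hSf, hsf⟩ ⟨hg, Sg, hSg, hsg⟩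
    refine ⟨fun h x => by simp [hf h x, hg h x], Sf ∪ Sg, hSf.union hSg, ?_⟩
    refine (Function.support_add f g).trans ?_
    rw [Set.mul_union]
    exact Set.union_subset_union hsf hsg
  zero_mem' := ⟨fun h x => by simp, ∅, Set.finite_empty, by simp⟩
  smul_mem' := by
    rintro c f ⟨hf, S, hS, hs⟩
    exact ⟨fun h x => by simp [hf h x], S, hS,
      (Function.support_const_smul_subset c f).trans hs⟩

/-- Right translation action on `cInd H ρ`. -/
def cIndAct (H : Subgroup G) (ρ : Representation k H V) (z : G) :
    cInd H ρ →ₗ[k] cInd H ρ where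
  toFun f := ⟨fun x => (f : G → V) (x * z), by
    obtain ⟨hf, S, hS, hs⟩ := f.2
    refine ⟨fun h x => by simpa [mul_assoc] using hf h (x * z),
      S * {z⁻¹}, hS.mul (Set.finite_singleton _), ?_⟩
    intro x hx
    have hx' : (f : G → V) (x * z) ≠ 0 := hx
    rcases hs hx' with ⟨h, hh, s, hsS, heq⟩
    refine ⟨h, hh, s * z⁻¹, Set.mul_mem_mul hsS rfl, ?_⟩
    have : h * s = x * z := heq
    calc h * (s * z⁻¹) = h * s * z⁻¹ := by rw [mul_assoc]
      _ = x * z * z⁻¹ := by rw [this]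
      _ = x := by simp⟩
  map_add' f g := by ext x; rfl
  map_smul' c f := by ext x; rfl

/-- The compactly induced representation of `G` on `cInd H ρ`, by right translation. -/
def cIndRep (H : Subgroup G) (ρ : Representation k H V) :
    Representation k G (cInd H ρ) where
  toFun := cIndAct H ρ
  map_one' := by
    refine LinearMap.ext fun f => Subtype.ext (funext fun x => ?_)
    simp [cIndAct]
  map_mul' z w := by
    refine LinearMap.ext fun f => Subtype.ext (funext fun x => ?_)
    simp [cIndAct, mul_assoc]

/-- The conjugate subgroup `g H g⁻¹`. -/
def conjSubgroup (g : G) (H : Subgroup G) : Subgroup G where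
  carrier := {x | g⁻¹ * x * g ∈ H}
  one_mem' := by simpa using H.one_mem
  mul_mem' := by
    intro a b ha hb
    have h : g⁻¹ * (a * b) * g = (g⁻¹ * a * g) * (g⁻¹ * b * g) := by group
    simp only [Set.mem_setOf_eq] at *
    rw [h]; exact mul_mem ha hb
  inv_mem' := by
    intro a ha
    simp only [Set.mem_setOf_eq] at *
    have h : g⁻¹ * a⁻¹ * g = (g⁻¹ * a * g)⁻¹ := by group
    rw [h]; exact inv_mem ha

lemma conjSubgroup_mono (g : G) {H K : Subgroup G} (h : H ≤ K) :
    conjSubgroup g H ≤ conjSubgroup g K := fun _ hx => h hx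

/-- The isomorphism `g H g⁻¹ → H`, `x ↦ g⁻¹ x g`. -/
def conjHom (g : G) (H : Subgroup G) : conjSubgroup g H →* H where
  toFun x := ⟨g⁻¹ * x * g, x.2⟩
  map_one' := by
    ext
    show g⁻¹ * 1 * g = 1
    group
  map_mul' x y := by
    ext
    show g⁻¹ * (↑x * ↑y) * g = (g⁻¹ * ↑x * g) * (g⁻¹ * ↑y * g)
    group

/-- The conjugate representation `ρᵍ` of `g H g⁻¹`, given by `ρᵍ(x) = ρ(g⁻¹ x g)`. -/
def conjRep (g : G) {H : Subgroup G} (ρ : Representation k H V) :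
    Representation k (conjSubgroup g H) V :=
  ρ.comp (conjHom g H)

/-- Subrepresentation on an invariant submodule. -/
def subRep {Γ : Type} [Group Γ] (ρ : Representation k Γ V) (p : Submodule k V)
    (hp : ∀ (g : Γ) (v : V), v ∈ p → ρ g v ∈ p) : Representation k Γ p where
  toFun g := (ρ g).restrict (fun v hv => hp g v hv)
  map_one' := by
    refine LinearMap.ext fun v => Subtype.ext ?_
    simp [LinearMap.restrict_apply]
  map_mul' g h := by
    refine LinearMap.ext fun v => Subtype.ext ?_
    simp [LinearMap.restrict_apply, map_mul]

/-- `N` is a subquotient of `M` (as `R`-modules). -/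
def IsSubquotient (R : Type*) [Ring R] (M : Type*) [AddCommGroup M] [Module R M]
    (N : Type*) [AddCommGroup N] [Module R N] : Prop :=
  ∃ (W : Submodule R M) (U : Submodule R W), Nonempty ((↥W ⧸ U) ≃ₗ[R] N)

/-- direct sum of a family of representations -/
def dsRep {ι : Type} {Γ : Type} [Group Γ] {W : ι → Type}
    [∀ i, AddCommGroup (W i)] [∀ i, Module k (W i)]
    (ρ : ∀ i, Representation k Γ (W i)) : Representation k Γ (⨁ i, W i) where
  toFun g := DFinsupp.mapRange.linearMap (fun i => ρ i g)
  map_one' := by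
    simp only [map_one]
    exact DFinsupp.mapRange.linearMap_id
  map_mul' g h := by
    simp only [map_mul]
    exact DFinsupp.mapRange.linearMap_comp _ _

/-- stabilizer of a subspace -/
def stab (ρ : Representation k G V) (p : Submodule k V) : Subgroup G where
  carrier := {g | Submodule.map (ρ g) p = p}
  one_mem' := by
    show Submodule.map (ρ 1) p = p
    rw [map_one, Module.End.one_eq_id, Submodule.map_id]
  mul_mem' := by
    intro a b ha hb
    simp only [Set.mem_setOf_eq] at *
    rw [map_mul, Module.End.mul_eq_comp, Submodule.map_comp, hb, ha]
  inv_mem' := by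
    intro a ha
    simp only [Set.mem_setOf_eq] at *
    conv_lhs => rw [← ha]
    rw [← Submodule.map_comp, ← Module.End.mul_eq_comp, ← map_mul, inv_mul_cancel, map_one,
      Module.End.one_eq_id, Submodule.map_id]

lemma stab_mem {ρ : Representation k G V} {p : Submodule k V} {g : G}
    (hg : g ∈ stab ρ p) {v : V} (hv : v ∈ p) : ρ g v ∈ p :=
  hg ▸ Submodule.mem_map_of_mem hv

/-- twist of a representation by a character -/
def twist (ρ : Representation k G V) (χ : G →* kˣ) : Representation k G V where
  toFun g := (χ g : k) • ρ g
  map_one' := by simp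
  map_mul' g h := by
    simp only [map_mul, Units.val_mul]
    rw [smul_mul_smul_comm]

/-- Restriction of a representation to a subgroup. -/
def resRep (H : Subgroup G) (ρ : Representation k G V) : Representation k H V :=
  ρ.comp H.subtype

end Paper

open Paper

/-!
Mackey's argument, by hand. For a subgroup `K ⊇ H` the functions in `Ind_H^G ρ₁` vanishing off
`K` and those vanishing on `K` are complementary subrepresentations of `Res_Γ π` whenever
`Γ ≤ K`. For `K = Γ = H`, evaluation at `1` identifies the first summand with `ρ₁`. For
`K = S`, `Γ = N`, evaluation at a set `r` of representatives of `H \ S`, untwisted by the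
isomorphisms `ρ' ≅ (ρ')^{r i}` defining `S`, identifies the first summand with `[S : H]` copies
of `ρ'`. Evaluation at any `x ∉ S` is an `N`-map to `(ρ')ˣ ≇ ρ'`, so by Schur's lemma `ρ'`
admits no nonzero map into the second summand.
-/

open Representation

namespace Representation

variable {k Γ Γ' V W : Type*} [Field k] [Monoid Γ] [Monoid Γ'] [AddCommGroup V] [Module k V]
  [AddCommGroup W] [Module k W]

def subrepresentationCompOrderIso (ρ : Representation k Γ V) {φ : Γ' →* Γ}
    (hφ : Function.Surjective φ) : Subrepresentation ρ ≃o Subrepresentation (ρ.comp φ) where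
  toFun σ := ⟨σ.toSubmodule, fun g _ hv => σ.apply_mem_toSubmodule (φ g) hv⟩
  invFun σ := ⟨σ.toSubmodule, fun g v hv => by
    obtain ⟨g', rfl⟩ := hφ g
    exact σ.apply_mem_toSubmodule g' hv⟩
  left_inv _ := rfl
  right_inv _ := rfl
  map_rel_iff' := Iff.rfl

theorem IsIrreducible.comp {ρ : Representation k Γ V} [IsIrreducible ρ] {φ : Γ' →* Γ}
    (hφ : Function.Surjective φ) : IsIrreducible (ρ.comp φ) :=
  (subrepresentationCompOrderIso ρ hφ).symm.isSimpleOrder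

noncomputable def Subrepresentation.asSubmoduleEquivPi {ρ : Representation k Γ V}
    {τ : Representation k Γ W} {ι : Type*} (σ : Subrepresentation ρ)
    (ψ : ι → IntertwiningMap ρ τ) (hψ : Function.Bijective fun (v : σ) (i : ι) => ψ i v) :
    σ.asSubmodule ≃ₗ[MonoidAlgebra k Γ] (ι → τ.asModule) :=
  .ofBijective (LinearMap.pi fun i =>
    IntertwiningMap.equivLinearMapAsModule ρ τ (ψ i) ∘ₗ σ.asSubmodule.subtype) hψ

end Representation

namespace Paper

section Cosets

variable {G : Type} [Group G]

structure IsRightCosetReps {ι : Type*} (H : Subgroup G) (U : Set G) (r : ι → G) : Prop where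
  mem : ∀ i, r i ∈ U
  exists_mul_inv_mem : ∀ x ∈ U, ∃ i, x * (r i)⁻¹ ∈ H
  eq_of_mul_inv_mem : ∀ i j, r i * (r j)⁻¹ ∈ H → i = j

theorem isRightCosetReps_one (H : Subgroup G) :
    IsRightCosetReps H (H : Set G) (fun _ : Unit => (1 : G)) :=
  ⟨fun _ => H.one_mem, fun x hx => ⟨(), by rwa [inv_one, mul_one]⟩, fun _ _ _ => rfl⟩

/-- The representatives are the inverses `(q.out)⁻¹` of representatives of the left cosets `q`. -/
theorem exists_isRightCosetReps (H K : Subgroup G) [H.FiniteIndex] :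
    ∃ r : Fin (H.relIndex K) → G, IsRightCosetReps H (K : Set G) r := by
  let e : Fin (H.relIndex K) ≃ K ⧸ H.subgroupOf K := (Finite.equivFin _).symm
  refine ⟨fun i => ((e i).out⁻¹ : K), fun i => ((e i).out⁻¹ : K).2, fun x hx => ?_,
    fun i j hij => e.injective ?_⟩
  · refine ⟨e.symm (⟨x, hx⟩⁻¹ : K), ?_⟩
    have h : ((e (e.symm (⟨x, hx⟩⁻¹ : K))).out : K ⧸ H.subgroupOf K) = (⟨x, hx⟩⁻¹ : K) := by
      rw [e.apply_symm_apply, QuotientGroup.out_eq']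
    rw [QuotientGroup.eq, Subgroup.mem_subgroupOf] at h
    simpa using H.inv_mem h
  · rw [← QuotientGroup.out_eq' (e i), ← QuotientGroup.out_eq' (e j), QuotientGroup.eq,
      Subgroup.mem_subgroupOf]
    simpa using hij

end Cosets

variable {k : Type} [Field k] {G : Type} [Group G] {W : Type} [AddCommGroup W] [Module k W]

/-- Unlike `conjRep`, this is again a representation of `N`, namely `n ↦ σ (g n g⁻¹)`, the
twist appearing in the definition of `S`. -/
def conjRepNormal {N : Subgroup G} [N.Normal] (g : G) (σ : Representation k N W) :
    Representation k N W :=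
  σ.comp (MulAut.conjNormal g).toMonoidHom

instance {N : Subgroup G} [N.Normal] (g : G) (σ : Representation k N W) [IsIrreducible σ] :
    IsIrreducible (conjRepNormal g σ) :=
  IsIrreducible.comp (MulAut.conjNormal g).surjective

section CInd

variable {H : Subgroup G} (ρ : Representation k H W)

theorem cInd_apply_mul (f : cInd H ρ) (h : H) (x : G) :
    (f : G → W) (h * x) = ρ h ((f : G → W) x) :=
  f.2.1 h x

theorem indicator_mem_cInd {U : Set G} (hU : ∀ h ∈ H, ∀ x, h * x ∈ U ↔ x ∈ U)
    (f : cInd H ρ) : U.indicator (f : G → W) ∈ cInd H ρ := by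
  obtain ⟨hf, S, hS, hsupp⟩ := f.2
  refine ⟨fun h x => ?_, S, hS, ?_⟩
  · by_cases hx : x ∈ U
    · rw [Set.indicator_of_mem ((hU h h.2 x).2 hx), Set.indicator_of_mem hx, hf]
    · rw [Set.indicator_of_notMem (mt (hU h h.2 x).1 hx), Set.indicator_of_notMem hx, map_zero]
  · rw [Set.support_indicator]
    exact Set.inter_subset_right.trans hsupp

open Classical in
noncomputable def cInd.single (r : G) (w : W) : cInd H ρ :=
  ⟨fun x => if hx : x * r⁻¹ ∈ H then ρ ⟨x * r⁻¹, hx⟩ w else 0, by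
    refine ⟨fun h x => ?_, {r}, Set.finite_singleton r, fun x hx => ?_⟩
    · dsimp only
      by_cases hx : x * r⁻¹ ∈ H
      · have hhx : ↑h * x * r⁻¹ ∈ H := by rw [mul_assoc]; exact mul_mem h.2 hx
        rw [dif_pos hx, dif_pos hhx, ← Module.End.mul_apply, ← map_mul]
        congr 2
        exact Subtype.ext (mul_assoc _ _ _)
      · have hhx : ↑h * x * r⁻¹ ∉ H := by
          rwa [mul_assoc, Subgroup.mul_mem_cancel_left _ h.2]
        rw [dif_neg hx, dif_neg hhx, map_zero]
    · have hx' : x * r⁻¹ ∈ H := by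
        by_contra h
        exact hx (dif_neg h)
      exact ⟨x * r⁻¹, hx', r, rfl, inv_mul_cancel_right x r⟩⟩

theorem cInd.single_apply_self (r : G) (w : W) :
    ((cInd.single ρ r w : cInd H ρ) : G → W) r = w := by
  simp only [cInd.single, mul_inv_cancel, H.one_mem, dite_true]
  exact congrArg (· w) (map_one ρ)

theorem cInd.single_apply_of_notMem {r x : G} (w : W) (hx : x * r⁻¹ ∉ H) :
    ((cInd.single ρ r w : cInd H ρ) : G → W) x = 0 := by
  simp [cInd.single, hx]

def vanishingOff (Γ : Subgroup G) (U : Set G) (hU : ∀ x, ∀ γ ∈ Γ, x * γ ∈ U ↔ x ∈ U) :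
    Subrepresentation (resRep Γ (cIndRep H ρ)) where
  toSubmodule :=
    { carrier := {f | ∀ x ∉ U, (f : G → W) x = 0}
      add_mem' := fun hf hg x hx => by simp [hf x hx, hg x hx]
      zero_mem' := fun _ _ => rfl
      smul_mem' := fun c f hf x hx => by simp [hf x hx] }
  apply_mem_toSubmodule γ _ hf x hx := hf _ (mt (hU x γ γ.2).1 hx)

theorem isCompl_vanishingOff {Γ : Subgroup G} {U : Set G}
    (hU : ∀ x, ∀ γ ∈ Γ, x * γ ∈ U ↔ x ∈ U) (hUH : ∀ h ∈ H, ∀ x, h * x ∈ U ↔ x ∈ U) :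
    IsCompl (vanishingOff ρ Γ U hU).asSubmodule
      (vanishingOff ρ Γ Uᶜ fun x γ hγ => not_congr (hU x γ hγ)).asSubmodule := by
  constructor
  · rw [Submodule.disjoint_def]
    intro f hfU hfUc
    exact Subtype.ext <| funext fun x =>
      by_cases (fun hx : x ∈ U => hfUc x (by simpa using hx)) (hfU x)
  · rw [Submodule.codisjoint_iff_exists_add_eq]
    intro f
    have hUcH : ∀ h ∈ H, ∀ x, h * x ∈ Uᶜ ↔ x ∈ Uᶜ := fun h hh x => not_congr (hUH h hh x)
    let f' : cInd H ρ := f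
    refine ⟨(⟨U.indicator f', indicator_mem_cInd ρ hUH f'⟩ : cInd H ρ),
      (⟨Uᶜ.indicator f', indicator_mem_cInd ρ hUcH f'⟩ : cInd H ρ),
      fun x hx => Set.indicator_of_notMem hx _, fun x hx => Set.indicator_of_notMem hx _, ?_⟩
    exact Subtype.ext (Set.indicator_self_add_compl U _)

section Restriction

variable {ι : Type*} {U : Set G} {r : ι → G}

theorem eq_zero_of_vanishingOff_of_apply_eq_zero (hr : IsRightCosetReps H U r) {f : cInd H ρ}
    (hf : ∀ x ∉ U, (f : G → W) x = 0) (h0 : ∀ i, (f : G → W) (r i) = 0) : f = 0 := by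
  refine Subtype.ext (funext fun x => ?_)
  by_cases hx : x ∈ U
  · obtain ⟨i, hi⟩ := hr.exists_mul_inv_mem x hx
    have hfx := cInd_apply_mul ρ f ⟨_, hi⟩ (r i)
    rw [inv_mul_cancel_right] at hfx
    rw [hfx, h0, map_zero]
    rfl
  · exact hf x hx

theorem exists_vanishingOff_apply_eq [Finite ι] (hr : IsRightCosetReps H U r)
    (hUH : ∀ h ∈ H, ∀ x, h * x ∈ U ↔ x ∈ U) (v : ι → W) :
    ∃ f : cInd H ρ, (∀ x ∉ U, (f : G → W) x = 0) ∧ ∀ i, (f : G → W) (r i) = v i := by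
  have := Fintype.ofFinite ι
  refine ⟨∑ i, cInd.single ρ (r i) (v i), fun x hx => ?_, fun j => ?_⟩
  · simp only [Submodule.coe_sum, Finset.sum_apply]
    refine Finset.sum_eq_zero fun i _ => cInd.single_apply_of_notMem ρ _ fun hxi => hx ?_
    simpa using (hUH _ hxi _).2 (hr.mem i)
  · simp only [Submodule.coe_sum, Finset.sum_apply]
    rw [Finset.sum_eq_single j (fun i _ hij => cInd.single_apply_of_notMem ρ _
      fun h => hij (hr.eq_of_mul_inv_mem j i h).symm) (by simp)]
    exact cInd.single_apply_self ρ _ _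

theorem bijective_apply_vanishingOff [Finite ι] {Γ : Subgroup G}
    {hU : ∀ x, ∀ γ ∈ Γ, x * γ ∈ U ↔ x ∈ U} (hr : IsRightCosetReps H U r)
    (hUH : ∀ h ∈ H, ∀ x, h * x ∈ U ↔ x ∈ U) :
    Function.Bijective fun (f : vanishingOff ρ Γ U hU) (i : ι) =>
      ((f : cInd H ρ) : G → W) (r i) := by
  refine ⟨fun f g hfg => ?_, fun v => ?_⟩
  · refine Subtype.ext (sub_eq_zero.1 (eq_zero_of_vanishingOff_of_apply_eq_zero ρ hr
      (fun x hx => ?_) fun i => ?_))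
    · simp [f.2 x hx, g.2 x hx]
    · simpa [sub_eq_zero] using congr_fun hfg i
  · obtain ⟨f, hf, hfv⟩ := exists_vanishingOff_apply_eq ρ hr hUH v
    exact ⟨⟨f, hf⟩, funext hfv⟩

end Restriction

def cIndEvalOne : IntertwiningMap (resRep H (cIndRep H ρ)) ρ :=
  LinearMap.intertwiningMap_of_isIntertwiningMap _ _ ((LinearMap.proj 1).comp (cInd H ρ).subtype)
    fun h f => by
      change (f : G → W) (1 * h) = ρ h ((f : G → W) 1)
      rw [one_mul, ← mul_one (h : G)]
      exact cInd_apply_mul ρ f h 1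

theorem exists_isCompl_equiv_self :
    ∃ p q : Submodule (MonoidAlgebra k H) (resRep H (cIndRep H ρ)).asModule,
      IsCompl p q ∧ Nonempty (p ≃ₗ[MonoidAlgebra k H] ρ.asModule) := by
  have hU : ∀ x, ∀ γ ∈ H, x * γ ∈ (H : Set G) ↔ x ∈ (H : Set G) :=
    fun _ _ hγ => H.mul_mem_cancel_right hγ
  have hUH : ∀ h ∈ H, ∀ x, h * x ∈ (H : Set G) ↔ x ∈ (H : Set G) :=
    fun _ hh _ => H.mul_mem_cancel_left hh
  refine ⟨_, _, isCompl_vanishingOff ρ hU hUH, ⟨?_⟩⟩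
  exact ((vanishingOff ρ H H hU).asSubmoduleEquivPi (fun _ : Unit => cIndEvalOne ρ)
    (bijective_apply_vanishingOff ρ (isRightCosetReps_one H) hUH)).trans
    (LinearEquiv.funUnique Unit _ _)

variable {N : Subgroup G} [N.Normal] (hNH : N ≤ H)

def cIndEval (x : G) :
    IntertwiningMap (resRep N (cIndRep H ρ)) (conjRepNormal x (ρ.comp (Subgroup.inclusion hNH))) :=
  LinearMap.intertwiningMap_of_isIntertwiningMap _ _ ((LinearMap.proj x).comp (cInd H ρ).subtype)
    fun n f => by
      change (f : G → W) (x * n) =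
        ρ (Subgroup.inclusion hNH (MulAut.conjNormal x n)) ((f : G → W) x)
      rw [← cInd_apply_mul]
      simp

def conjRepNormalEquiv (h : H) :
    Equiv (ρ.comp (Subgroup.inclusion hNH))
      (conjRepNormal (h : G) (ρ.comp (Subgroup.inclusion hNH))) :=
  .mk (LinearMap.GeneralLinearGroup.toLinearEquiv (ρ.asGroupHom h)) fun n => by
    ext v
    change ρ h (ρ (Subgroup.inclusion hNH n) v) =
      ρ (Subgroup.inclusion hNH (MulAut.conjNormal (h : G) n)) (ρ h v)
    rw [← Module.End.mul_apply, ← map_mul, ← Module.End.mul_apply, ← map_mul]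
    congr 2
    ext
    simp

theorem linearMap_vanishingOff_eq_zero [IsIrreducible (ρ.comp (Subgroup.inclusion hNH))]
    {U : Set G} {hU : ∀ x, ∀ γ ∈ N, x * γ ∈ U ↔ x ∈ U}
    (hUconj : ∀ x ∈ U, IsEmpty (Equiv (ρ.comp (Subgroup.inclusion hNH))
      (conjRepNormal x (ρ.comp (Subgroup.inclusion hNH)))))
    (f : Representation.asModule (ρ.comp (Subgroup.inclusion hNH)) →ₗ[MonoidAlgebra k N]
      (vanishingOff ρ N U hU).asSubmodule) : f = 0 := by
  ext w
  rw [LinearMap.zero_apply]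
  by_contra hw
  let v : cInd H ρ := (f w).1
  obtain ⟨x, hx⟩ : ∃ x, (v : G → W) x ≠ 0 := by
    contrapose! hw
    exact (Subtype.ext (funext hw) : v = 0)
  have hxU : x ∈ U := by_contra fun h => hx ((f w).2 x h)
  let ψ := (cIndEval ρ hNH x).comp ((IntertwiningMap.equivLinearMapAsModule _ _).symm
    ((vanishingOff ρ N U hU).asSubmodule.subtype ∘ₗ f))
  have hψ : ψ ≠ 0 := fun h => hx (DFunLike.congr_fun h w)
  exact (hUconj x hxU).false
    (ψ.ofBijective ((IsIrreducible.bijective_or_eq_zero ψ).resolve_right hψ))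

theorem exists_isCompl_equiv_pi_of_stabilizer [H.FiniteIndex]
    [IsIrreducible (ρ.comp (Subgroup.inclusion hNH))] (S : Subgroup G)
    (hS : ∀ g, g ∈ S ↔ Nonempty (Equiv (ρ.comp (Subgroup.inclusion hNH))
      (conjRepNormal g (ρ.comp (Subgroup.inclusion hNH))))) :
    ∃ p q : Submodule (MonoidAlgebra k N) (resRep N (cIndRep H ρ)).asModule,
      IsCompl p q ∧
      Nonempty (p ≃ₗ[MonoidAlgebra k N]
        (Fin (H.relIndex S) → Representation.asModule (ρ.comp (Subgroup.inclusion hNH)))) ∧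
      ∀ f : Representation.asModule (ρ.comp (Subgroup.inclusion hNH)) →ₗ[MonoidAlgebra k N] q,
        f = 0 := by
  have hHS : H ≤ S := fun h hh => (hS h).2 ⟨conjRepNormalEquiv ρ hNH ⟨h, hh⟩⟩
  have hU : ∀ x, ∀ γ ∈ N, x * γ ∈ (S : Set G) ↔ x ∈ (S : Set G) :=
    fun _ _ hγ => S.mul_mem_cancel_right (hHS (hNH hγ))
  have hUH : ∀ h ∈ H, ∀ x, h * x ∈ (S : Set G) ↔ x ∈ (S : Set G) :=
    fun _ hh _ => S.mul_mem_cancel_left (hHS hh)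
  obtain ⟨r, hr⟩ := exists_isRightCosetReps H S
  have T := fun i => ((hS (r i)).1 (hr.mem i)).some
  refine ⟨_, _, isCompl_vanishingOff ρ hU hUH, ⟨(vanishingOff ρ N S hU).asSubmoduleEquivPi
    (fun i => (T i).symm.toIntertwiningMap.comp (cIndEval ρ hNH (r i))) ?_⟩,
    linearMap_vanishingOff_eq_zero ρ hNH fun x hx => not_nonempty_iff.1 ((hS x).not.1 hx)⟩
  exact (Function.Bijective.piMap fun i => (T i).symm.bijective).comp
    (bijective_apply_vanishingOff ρ hr hUH)

end CInd

end Paper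

theorem stmt9_general {k : Type} [Field k] {G : Type} [Group G]
    (N H : Subgroup G) [hN : N.Normal] (hNH : N ≤ H) [H.FiniteIndex]
    {W : Type} [AddCommGroup W] [Module k W] (ρ₁ : Representation k H W)
    (hρ' : IsSimpleModule (MonoidAlgebra k N)
      (Representation.asModule (ρ₁.comp (Subgroup.inclusion hNH))))
    (S : Subgroup G)
    (hS : ∀ g : G, g ∈ S ↔ ∃ T : W ≃ₗ[k] W, ∀ n : N,
      (T : W →ₗ[k] W) ∘ₗ (ρ₁.comp (Subgroup.inclusion hNH)) n =
        (ρ₁.comp (Subgroup.inclusion hNH)) ⟨g * n * g⁻¹, hN.conj_mem n n.2 g⟩ ∘ₗ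
          (T : W →ₗ[k] W)) :
    -- `ρ₁` is a direct summand of `Res_H π`
    (∃ (p q : Submodule (MonoidAlgebra k H)
        (Representation.asModule (resRep H (cIndRep H ρ₁)))),
      IsCompl p q ∧ Nonempty (p ≃ₗ[MonoidAlgebra k H] ρ₁.asModule)) ∧
    -- the multiplicity of `ρ'` in `Res_N π` is `[S : H]`
    (∃ (p q : Submodule (MonoidAlgebra k N)
        (Representation.asModule (resRep N (cIndRep H ρ₁)))),
      IsCompl p q ∧
      Nonempty (p ≃ₗ[MonoidAlgebra k N]
        (Fin (H.relIndex S) →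
          Representation.asModule (ρ₁.comp (Subgroup.inclusion hNH)))) ∧
      ∀ f : Representation.asModule (ρ₁.comp (Subgroup.inclusion hNH))
          →ₗ[MonoidAlgebra k N] q, f = 0) := by
  have := (irreducible_iff_isSimpleModule_asModule _).2 hρ'
  refine ⟨exists_isCompl_equiv_self ρ₁, exists_isCompl_equiv_pi_of_stabilizer ρ₁ hNH S fun g => ?_⟩
  rw [hS g]
  exact ⟨fun ⟨T, hT⟩ => ⟨.mk T hT⟩, fun ⟨φ⟩ => ⟨φ.toLinearEquiv, φ.isIntertwining'⟩⟩

/-- let `N ⊴ G` with `G/N` finite abelian, `N ≤ H ≤ G` with `H` of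
finite index, `k` a field, `ρ₁` an irreducible `k[H]`-module whose restriction
`ρ' = Res_N ρ₁` is irreducible, and suppose `π = Ind_H^G ρ₁` is irreducible and
`Res_N π` is semisimple.  Then `Res_H π` contains `ρ₁` as a direct summand, and
the multiplicity of `ρ'` in `Res_N π` equals `[S : H]`, where
`S = {g ∈ G : (ρ')ᵍ ≅ ρ'}` is the `G`-stabilizer of `ρ'` up to isomorphism. -/
theorem stmt9 {k : Type} [Field k] {G : Type} [Group G]
    (N H : Subgroup G) [hN : N.Normal] (hNH : N ≤ H) [H.FiniteIndex]
    [Finite (G ⧸ N)] (hcomm : ∀ a b : G ⧸ N, a * b = b * a)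
    {W : Type} [AddCommGroup W] [Module k W] (ρ₁ : Representation k H W)
    (hρ₁ : IsSimpleModule (MonoidAlgebra k H) ρ₁.asModule)
    (hρ' : IsSimpleModule (MonoidAlgebra k N)
      (Representation.asModule (ρ₁.comp (Subgroup.inclusion hNH))))
    (hπ : IsSimpleModule (MonoidAlgebra k G) (Representation.asModule (cIndRep H ρ₁)))
    (hss : IsSemisimpleModule (MonoidAlgebra k N)
      (Representation.asModule (resRep N (cIndRep H ρ₁))))
    (S : Subgroup G)
    (hS : ∀ g : G, g ∈ S ↔ ∃ T : W ≃ₗ[k] W, ∀ n : N,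
      (T : W →ₗ[k] W) ∘ₗ (ρ₁.comp (Subgroup.inclusion hNH)) n =
        (ρ₁.comp (Subgroup.inclusion hNH)) ⟨g * n * g⁻¹, hN.conj_mem n n.2 g⟩ ∘ₗ
          (T : W →ₗ[k] W)) :
    -- `ρ₁` is a direct summand of `Res_H π`
    (∃ (p q : Submodule (MonoidAlgebra k H)
        (Representation.asModule (resRep H (cIndRep H ρ₁)))),
      IsCompl p q ∧ Nonempty (p ≃ₗ[MonoidAlgebra k H] ρ₁.asModule)) ∧
    -- the multiplicity of `ρ'` in `Res_N π` is `[S : H]`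
    (∃ (p q : Submodule (MonoidAlgebra k N)
        (Representation.asModule (resRep N (cIndRep H ρ₁)))),
      IsCompl p q ∧
      Nonempty (p ≃ₗ[MonoidAlgebra k N]
        (Fin (H.relIndex S) →
          Representation.asModule (ρ₁.comp (Subgroup.inclusion hNH)))) ∧
      ∀ f : Representation.asModule (ρ₁.comp (Subgroup.inclusion hNH))
          →ₗ[MonoidAlgebra k N] q, f = 0) :=
  stmt9_general N H (hN := hN) hNH ρ₁ hρ' S hS
end
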